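/- arXiv:2408.08380 — 6 statements merged into one kernel-verified Lean document; each statement's English description precedes it below -/
import Mathlib

section
/- Let F be a field of characteristic 2, d a positive integer, and W a subspace of F^d. Then there exists a vector x in the orthogonal complement of W with ⟨x,x⟩ ≠ 0 if and only if the all-one vector does not lie in W. -/
/-! In characteristic 2 squaring is additive, so `⟨x, x⟩ = (∑ xᵢ)² = ⟨x, 1⟩²`. Hence a vector of
`W^⊥` is non-self-orthogonal exactly when it is not orthogonal to the all-one vector, and such a
vector exists iff `1 ∉ W^⊥⊥ = W`. -/

open Matrix

theorem exists_forall_dotProduct_eq_zero_and_ne_zero_iff_notMem {K ι : Type*} [Field K]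
    [Fintype ι] (W : Submodule K (ι → K)) (v : ι → K) :
    (∃ x : ι → K, (∀ y ∈ W, x ⬝ᵥ y = 0) ∧ x ⬝ᵥ v ≠ 0) ↔ v ∉ W := by
  classical
  constructor
  · rintro ⟨x, hxW, hxv⟩ hv
    exact hxv (hxW v hv)
  · intro hv
    obtain ⟨f, hfv, hfW⟩ := W.exists_dual_map_eq_bot_of_notMem hv inferInstance
    have hf : ∀ y, (dotProductEquiv K ι).symm f ⬝ᵥ y = f y := fun y =>
      LinearMap.congr_fun ((dotProductEquiv K ι).apply_symm_apply f) y
    refine ⟨(dotProductEquiv K ι).symm f, fun y hy => ?_, by rwa [hf]⟩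
    rw [hf, ← LinearMap.mem_ker]
    exact LinearMap.le_ker_iff_map.mpr hfW hy

theorem CharTwo.dotProduct_self_eq_dotProduct_one_mul_self {R ι : Type*} [CommSemiring R] [CharP R 2]
    [Fintype ι] (x : ι → R) : x ⬝ᵥ x = (x ⬝ᵥ 1) * (x ⬝ᵥ 1) := by
  rw [dotProduct_one, CharTwo.sum_mul_self]
  rfl

theorem stmt_0_general (F : Type*) [Field F] [CharP F 2] (d : ℕ)
    (W : Submodule F (Fin d → F)) :
    (∃ x : Fin d → F, (∀ y ∈ W, ∑ t, x t * y t = 0) ∧ ∑ t, x t * x t ≠ 0) ↔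
      (fun _ : Fin d => (1 : F)) ∉ W := by
  have hself (x : Fin d → F) : x ⬝ᵥ x ≠ 0 ↔ x ⬝ᵥ 1 ≠ 0 := by
    rw [CharTwo.dotProduct_self_eq_dotProduct_one_mul_self, ne_eq, mul_self_eq_zero]
  change (∃ x, (∀ y ∈ W, x ⬝ᵥ y = 0) ∧ x ⬝ᵥ x ≠ 0) ↔ (1 : Fin d → F) ∉ W
  simp only [hself]
  exact exists_forall_dotProduct_eq_zero_and_ne_zero_iff_notMem W 1

/-- Let F be a field of characteristic 2, d a positive integer, and W a
subspace of F^d. Then there exists a vector x in the orthogonal complement of W with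
⟨x,x⟩ ≠ 0 iff the all-one vector does not lie in W. -/
theorem stmt_0 (F : Type*) [Field F] [CharP F 2] (d : ℕ) (hd : 1 ≤ d)
    (W : Submodule F (Fin d → F)) :
    (∃ x : Fin d → F, (∀ y ∈ W, ∑ t, x t * y t = 0) ∧ ∑ t, x t * x t ≠ 0) ↔
      (fun _ : Fin d => (1 : F)) ∉ W :=
  stmt_0_general F d W
end

section
/- Let F be a field of characteristic different from 2, d a positive integer, and W a subspace of F^d. Then there exists a vector x in the orthogonal complement W^⊥ with ⟨x,x⟩ ≠ 0 if and only if W^⊥ is not contained in W. -/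
/-!
If every vector of `W^⊥` were isotropic, then by polarization (this is where `2 ≠ 0` enters)
the symmetric form would vanish identically on `W^⊥`, i.e. `W^⊥ ⊆ W^⊥⊥`; and `W^⊥⊥ = W` since
the dot product is nondegenerate on the finite-dimensional space `F^d`.
-/

open LinearMap (BilinForm)

namespace LinearMap.BilinForm

variable {K V : Type*} [Field K] [AddCommGroup V] [Module K V]

theorem le_orthogonal_of_forall_self_eq_zero [Invertible (2 : K)] {B : BilinForm K V}
    (hB : B.IsSymm) {U : Submodule K V} (hU : ∀ x ∈ U, B x x = 0) : U ≤ B.orthogonal U := by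
  have hBU : B.restrict U = 0 := by
    by_contra hne
    obtain ⟨x, hx⟩ := exists_bilinForm_self_ne_zero hne (isSymm_iff.mp (hB.restrict U))
    exact hx (hU x x.2)
  intro y hy x hx
  exact congr($hBU ⟨x, hx⟩ ⟨y, hy⟩)

theorem exists_mem_orthogonal_self_ne_zero_iff [FiniteDimensional K V] [Invertible (2 : K)]
    {B : BilinForm K V} (hB : B.IsSymm) (hBn : B.Nondegenerate) (W : Submodule K V) :
    (∃ x ∈ B.orthogonal W, B x x ≠ 0) ↔ ¬B.orthogonal W ≤ W := by
  constructor
  · rintro ⟨x, hxW, hxx⟩ hle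
    exact hxx (hxW x (hle hxW))
  · intro hnle
    by_contra! hiso
    refine hnle ((le_orthogonal_of_forall_self_eq_zero hB hiso).trans ?_)
    rw [orthogonal_orthogonal hBn hB.isRefl]

end LinearMap.BilinForm

section DotProduct

variable {R n : Type*} [CommRing R] [Fintype n]

theorem isSymm_dotProductBilin :
    BilinForm.IsSymm (dotProductBilin R R : BilinForm R (n → R)) :=
  ⟨fun x y => dotProduct_comm x y⟩

theorem nondegenerate_dotProductBilin :
    (dotProductBilin R R : BilinForm R (n → R)).Nondegenerate :=
  ⟨fun x hx => dotProduct_eq_zero x hx,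
    fun y hy => dotProduct_eq_zero y fun x => (dotProduct_comm y x).trans (hy x)⟩

theorem mem_orthogonal_dotProductBilin_iff {W : Submodule R (n → R)} {x : n → R} :
    x ∈ BilinForm.orthogonal (dotProductBilin R R : BilinForm R (n → R)) W ↔
      ∀ y ∈ W, x ⬝ᵥ y = 0 := by
  simp only [BilinForm.mem_orthogonal_iff, dotProductBilin_apply_apply, dotProduct_comm _ x]

end DotProduct

theorem stmt_1_general (F : Type*) [Field F] (h2 : (2 : F) ≠ 0) (d : ℕ)
    (W : Submodule F (Fin d → F)) :
    (∃ x : Fin d → F, (∀ y ∈ W, ∑ t, x t * y t = 0) ∧ ∑ t, x t * x t ≠ 0) ↔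
      ∃ x : Fin d → F, (∀ y ∈ W, ∑ t, x t * y t = 0) ∧ x ∉ W := by
  have := invertibleOfNonzero h2
  simpa only [mem_orthogonal_dotProductBilin_iff, dotProductBilin_apply_apply,
    SetLike.not_le_iff_exists, dotProduct] using
    BilinForm.exists_mem_orthogonal_self_ne_zero_iff
      isSymm_dotProductBilin nondegenerate_dotProductBilin W

/-- characteristic ≠ 2: W^⊥ has a non-self-orthogonal vector iff W^⊥ ⊄ W. -/
theorem stmt_1 (F : Type*) [Field F] (h2 : (2 : F) ≠ 0) (d : ℕ) (hd : 1 ≤ d)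
    (W : Submodule F (Fin d → F)) :
    (∃ x : Fin d → F, (∀ y ∈ W, ∑ t, x t * y t = 0) ∧ ∑ t, x t * x t ≠ 0) ↔
      ∃ x : Fin d → F, (∀ y ∈ W, ∑ t, x t * y t = 0) ∧ x ∉ W :=
  stmt_1_general F h2 d W
end

section
/- Let F be a field of characteristic different from 2, let d be a positive integer, and let W be a subspace of F^d with dim(W) < ⌈d/2⌉. Then there exists a vector x ∈ W^⊥ with ⟨x,x⟩ ≠ 0. -/
/-!
If every vector of `U = W^⊥` were isotropic, polarization (using `2 ≠ 0`) would make `U`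
totally isotropic, i.e. `U ≤ U^⊥ = W`. Since `dim U = d - dim W`, this forces `d ≤ 2 dim W`,
contradicting `dim W < ⌈d/2⌉`.
-/

open Module
open LinearMap (BilinForm)

namespace LinearMap.BilinForm

variable {K V : Type*} [Field K] [AddCommGroup V] [Module K V]

theorem le_orthogonal_self_of_forall_apply_self_eq_zero {B : BilinForm K V} (hB : B.IsSymm)
    (h2 : (2 : K) ≠ 0) {U : Submodule K V} (hU : ∀ x ∈ U, B x x = 0) :
    U ≤ B.orthogonal U := by
  by_contra hle
  have hrestrict : B.restrict U ≠ 0 := fun h0 =>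
    hle fun x hx y hy => by simpa using congr($h0 ⟨y, hy⟩ ⟨x, hx⟩)
  have := invertibleOfNonzero h2
  obtain ⟨x, hx⟩ := exists_bilinForm_self_ne_zero hrestrict (isSymm_iff.mp (hB.restrict U))
  exact hx (hU x x.2)

theorem finrank_le_two_mul_of_orthogonal_le_orthogonal_orthogonal [FiniteDimensional K V]
    {B : BilinForm K V} (hB : B.Nondegenerate) (hB₀ : B.IsRefl) {W : Submodule K V}
    (hW : B.orthogonal W ≤ B.orthogonal (B.orthogonal W)) :
    finrank K V ≤ 2 * finrank K W := by
  have hdim := Submodule.finrank_mono (orthogonal_orthogonal hB hB₀ W ▸ hW)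
  rw [finrank_orthogonal hB] at hdim
  have := Submodule.finrank_le W
  omega

theorem exists_mem_orthogonal_apply_self_ne_zero [FiniteDimensional K V] {B : BilinForm K V}
    (hB : B.Nondegenerate) (hBs : B.IsSymm) (h2 : (2 : K) ≠ 0) {W : Submodule K V}
    (hW : 2 * finrank K W < finrank K V) :
    ∃ x ∈ B.orthogonal W, B x x ≠ 0 := by
  by_contra! hiso
  have := finrank_le_two_mul_of_orthogonal_le_orthogonal_orthogonal hB hBs.isRefl
    (le_orthogonal_self_of_forall_apply_self_eq_zero hBs h2 hiso)
  omega

end LinearMap.BilinForm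

namespace Matrix

variable {R n : Type*} [CommRing R] [Fintype n]

theorem isSymm_dotProductBilin :
    LinearMap.BilinForm.IsSymm (dotProductBilin R R : LinearMap.BilinForm R (n → R)) :=
  ⟨dotProduct_comm⟩

theorem nondegenerate_dotProductBilin [DecidableEq n] :
    (dotProductBilin R R : LinearMap.BilinForm R (n → R)).Nondegenerate :=
  ⟨fun _ h => dotProduct_eq_zero _ h,
    fun _ h => dotProduct_eq_zero _ fun w => dotProduct_comm _ w ▸ h w⟩

end Matrix

theorem stmt_2_general (F : Type*) [Field F] (h2 : (2 : F) ≠ 0) (d : ℕ)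
    (W : Submodule F (Fin d → F)) (hW : Module.finrank F W < (d + 1) / 2) :
    ∃ x : Fin d → F, (∀ y ∈ W, ∑ t, x t * y t = 0) ∧ ∑ t, x t * x t ≠ 0 := by
  obtain ⟨x, hx, hxx⟩ := LinearMap.BilinForm.exists_mem_orthogonal_apply_self_ne_zero
    Matrix.nondegenerate_dotProductBilin Matrix.isSymm_dotProductBilin h2
    (W := W) (by rw [Module.finrank_fin_fun]; omega)
  refine ⟨x, fun y hy => ?_, hxx⟩
  rw [← dotProduct, dotProduct_comm]
  exact hx y hy

/-- char ≠ 2, dim W < ⌈d/2⌉ implies W^⊥ contains a non-self-orthogonal vector. -/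
theorem stmt_2 (F : Type*) [Field F] (h2 : (2 : F) ≠ 0) (d : ℕ) (hd : 1 ≤ d)
    (W : Submodule F (Fin d → F)) (hW : Module.finrank F W < (d + 1) / 2) :
    ∃ x : Fin d → F, (∀ y ∈ W, ∑ t, x t * y t = 0) ∧ ∑ t, x t * x t ≠ 0 :=
  stmt_2_general F h2 d W hW
end

section
/- Let F be a field, d ≥ 3 an integer, and H the complement of the cycle C_{2d} on vertices x_0, …, x_{2d-1}. For every d-dimensional orthogonal representation (u_i)_{0≤i<2d} of H over F, the vectors u_0 and u_1 assigned to the cycle-consecutive vertices x_0 and x_1 are either orthogonal (⟨u_0,u_1⟩=0) or proportional (u_1 = α·u_0 for some α ∈ F). -/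
section Aux

variable {F : Type*} [Field F] {d : ℕ}

lemma aux_dot_sum_left (c : Fin d → F) (v : Fin d → Fin d → F) (w : Fin d → F) :
    ∑ t, (∑ i, c i • v i) t * w t = ∑ i, c i * ∑ t, v i t * w t := by
  simp only [Finset.sum_apply, Pi.smul_apply, smul_eq_mul, Finset.sum_mul, Finset.mul_sum,
    mul_assoc]
  exact Finset.sum_comm

lemma aux_dot_sum_right (c : Fin d → F) (v : Fin d → Fin d → F) (w : Fin d → F) :
    ∑ t, w t * (∑ i, c i • v i) t = ∑ i, c i * ∑ t, w t * v i t := by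
  have : ∀ i, c i * ∑ t, w t * v i t = ∑ t, c i * (w t * v i t) := fun i => Finset.mul_sum _ _ _
  simp only [Finset.sum_apply, Pi.smul_apply, smul_eq_mul, Finset.mul_sum, this]
  rw [Finset.sum_comm]
  congr 1; ext t; congr 1; ext i; ring

lemma aux_expand (hd : 0 < d) (v : Fin d → Fin d → F)
    (ho : ∀ i j, i ≠ j → ∑ t, v i t * v j t = 0)
    (hn : ∀ i, ∑ t, v i t * v i t ≠ 0) (w : Fin d → F) :
    ∃ c : Fin d → F, w = ∑ i, c i • v i := by
  have hli : LinearIndependent F v := by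
    rw [Fintype.linearIndependent_iff]
    intro g hg j
    have h0 : ∑ t, (∑ i, g i • v i) t * v j t = 0 := by rw [hg]; simp
    rw [aux_dot_sum_left] at h0
    rw [Fintype.sum_eq_single j (fun i hij => by rw [ho i j hij, mul_zero])] at h0
    exact (mul_eq_zero.1 h0).resolve_right (hn j)
  haveI : Nonempty (Fin d) := ⟨⟨0, hd⟩⟩
  let b := basisOfLinearIndependentOfCardEqFinrank hli (by simp)
  refine ⟨fun i => b.repr w i, ?_⟩
  have := b.sum_repr w
  simp only [b, coe_basisOfLinearIndependentOfCardEqFinrank] at this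
  exact this.symm

lemma aux_coef (hd : 0 < d) (v : Fin d → Fin d → F)
    (ho : ∀ i j, i ≠ j → ∑ t, v i t * v j t = 0)
    (hn : ∀ i, ∑ t, v i t * v i t ≠ 0) (w : Fin d → F) (c : Fin d → F)
    (hw : w = ∑ i, c i • v i) (j : Fin d) :
    ∑ t, w t * v j t = c j * ∑ t, v j t * v j t := by
  rw [hw, aux_dot_sum_left]
  exact Fintype.sum_eq_single j (fun i hij => by rw [ho i j hij, mul_zero])

lemma aux_cast_ne {n a b : ℕ} (ha : a < n) (hb : b < n) (h : a ≠ b) :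
    (a : ZMod n) ≠ (b : ZMod n) := by
  intro hab
  rw [ZMod.natCast_eq_natCast_iff, Nat.ModEq, Nat.mod_eq_of_lt ha, Nat.mod_eq_of_lt hb] at hab
  exact h hab

end Aux

/-- in any d-dimensional orthogonal representation of the complement of
C_{2d} over F, the vectors of the cycle-consecutive vertices x_0 and x_1 are
orthogonal or proportional. -/
theorem stmt_8 (F : Type*) [Field F] (d : ℕ) (hd : 3 ≤ d)
    (u : ZMod (2 * d) → Fin d → F)
    (hself : ∀ i, ∑ t, u i t * u i t ≠ 0)
    (horth : ∀ i j : ZMod (2 * d), i ≠ j → j ≠ i + 1 → i ≠ j + 1 →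
      ∑ t, u i t * u j t = 0) :
    (∑ t, u 0 t * u 1 t = 0) ∨ ∃ α : F, u 1 = α • u 0 := by
  by_cases hs : ∑ t, u 0 t * u 1 t = 0
  · exact Or.inl hs
  right
  have hdpos : 0 < d := by omega
  -- symmetry of the dot product
  have sym : ∀ i j : ZMod (2 * d), ∑ t, u i t * u j t = ∑ t, u j t * u i t := by
    intro i j; exact Finset.sum_congr rfl (fun t _ => mul_comm _ _)
  -- casts of small naturals
  have hzero : (0 : ZMod (2 * d)) = ((0 : ℕ) : ZMod (2 * d)) := by norm_cast
  have hone : (1 : ZMod (2 * d)) = ((1 : ℕ) : ZMod (2 * d)) := by norm_cast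
  have hcast_add_one : ∀ a : ℕ, ((a : ZMod (2 * d)) + 1) = ((a + 1 : ℕ) : ZMod (2 * d)) := by
    intro a; push_cast; ring
  have hself_top : ((2 * d : ℕ) : ZMod (2 * d)) = ((0 : ℕ) : ZMod (2 * d)) := by
    simp [ZMod.natCast_self]
  -- a convenient form of horth for natural number indices
  have HO : ∀ a b : ℕ, a < 2 * d → b < 2 * d → a ≠ b → b ≠ (a + 1) % (2 * d) →
      a ≠ (b + 1) % (2 * d) → ∑ t, u a t * u b t = 0 := by
    intro a b ha hb h1 h2 h3
    apply horth
    · exact aux_cast_ne ha hb h1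
    · rw [hcast_add_one]
      have : ((a + 1 : ℕ) : ZMod (2 * d)) = (((a + 1) % (2 * d) : ℕ) : ZMod (2 * d)) := by
        simp [ZMod.natCast_mod]
      rw [this]
      exact aux_cast_ne hb (Nat.mod_lt _ (by omega)) h2
    · rw [hcast_add_one]
      have : ((b + 1 : ℕ) : ZMod (2 * d)) = (((b + 1) % (2 * d) : ℕ) : ZMod (2 * d)) := by
        simp [ZMod.natCast_mod]
      rw [this]
      exact aux_cast_ne ha (Nat.mod_lt _ (by omega)) h3
  -- even and odd families
  set E : Fin d → Fin d → F := fun i => u ((2 * (i : ℕ) : ℕ) : ZMod (2 * d)) with hE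
  set O : Fin d → Fin d → F := fun i => u ((2 * (i : ℕ) + 1 : ℕ) : ZMod (2 * d)) with hO
  have hEorth : ∀ i j : Fin d, i ≠ j → ∑ t, E i t * E j t = 0 := by
    intro i j hij
    have hi := i.isLt; have hj := j.isLt
    have hij' : (i : ℕ) ≠ (j : ℕ) := fun h => hij (Fin.ext h)
    apply HO <;> try omega
    · rw [Nat.mod_eq_of_lt (by omega)]; omega
    · rw [Nat.mod_eq_of_lt (by omega)]; omega
  have hEnz : ∀ i, ∑ t, E i t * E i t ≠ 0 := fun i => hself _
  have hOorth : ∀ i j : Fin d, i ≠ j → ∑ t, O i t * O j t = 0 := by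
    intro i j hij
    have hi := i.isLt; have hj := j.isLt
    have hij' : (i : ℕ) ≠ (j : ℕ) := fun h => hij (Fin.ext h)
    apply HO <;> try omega
    · -- 2j+1 ≠ (2i+2) % 2d
      rcases Nat.lt_or_ge ((i : ℕ) + 1) d with h | h
      · rw [Nat.mod_eq_of_lt (by omega)]; omega
      · have : (i : ℕ) = d - 1 := by omega
        rw [this]
        have : 2 * (d - 1) + 1 + 1 = 2 * d := by omega
        rw [this, Nat.mod_self]; omega
    · rcases Nat.lt_or_ge ((j : ℕ) + 1) d with h | h
      · rw [Nat.mod_eq_of_lt (by omega)]; omega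
      · have : (j : ℕ) = d - 1 := by omega
        rw [this]
        have : 2 * (d - 1) + 1 + 1 = 2 * d := by omega
        rw [this, Nat.mod_self]; omega
  have hOnz : ∀ i, ∑ t, O i t * O i t ≠ 0 := fun i => hself _
  -- useful Fin elements
  set i0 : Fin d := ⟨0, hdpos⟩ with hi0
  set iL : Fin d := ⟨d - 1, by omega⟩ with hiL
  have hi0v : (i0 : ℕ) = 0 := rfl
  have hiLv : (iL : ℕ) = d - 1 := rfl
  -- expand u (2d-1) in the even basis
  obtain ⟨c, hc⟩ := aux_expand hdpos E hEorth hEnz (u ((2 * d - 1 : ℕ) : ZMod (2 * d)))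
  -- c j = 0 for j ∉ {i0, iL}
  have hcj : ∀ j : Fin d, j ≠ i0 → j ≠ iL → c j = 0 := by
    intro j hj0 hjL
    have hj := j.isLt
    have hj0' : (j : ℕ) ≠ 0 := fun h => hj0 (Fin.ext (h.trans hi0v.symm))
    have hjL' : (j : ℕ) ≠ d - 1 := fun h => hjL (Fin.ext (h.trans hiLv.symm))
    have horto : ∑ t, u ((2 * d - 1 : ℕ) : ZMod (2 * d)) t * E j t = 0 := by
      apply HO <;> try omega
      · -- 2j ≠ (2d-1+1) % 2d = 0
        have : 2 * d - 1 + 1 = 2 * d := by omega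
        rw [this, Nat.mod_self]; omega
      · rw [Nat.mod_eq_of_lt (by omega)]; omega
    have := aux_coef hdpos E hEorth hEnz _ c hc j
    rw [horto] at this
    exact ((mul_eq_zero.1 this.symm).resolve_right (hEnz j))
  -- ⟨u 1, u (2d-1)⟩ = 0 forces c i0 = 0
  have hc0 : c i0 = 0 := by
    have h1 : ∑ t, u 1 t * u ((2 * d - 1 : ℕ) : ZMod (2 * d)) t = 0 := by
      rw [hone]
      apply HO <;> try omega
      · rw [Nat.mod_eq_of_lt (by omega)]; omega
      · have : 2 * d - 1 + 1 = 2 * d := by omega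
        rw [this, Nat.mod_self]; omega
    rw [hc, aux_dot_sum_right] at h1
    rw [Fintype.sum_eq_single i0 (fun j hj => ?_)] at h1
    · -- h1 : c i0 * ⟨u 1, E i0⟩ = 0, and ⟨u 1, E i0⟩ = ⟨u 1, u 0⟩ = s ≠ 0
      have hE0 : E i0 = u 0 := by
        simp only [hE, hi0v, Nat.mul_zero, Nat.cast_zero]
      rw [hE0] at h1
      have hs' : ∑ t, u 1 t * u 0 t ≠ 0 := by rw [sym]; exact hs
      exact (mul_eq_zero.1 h1).resolve_right hs'
    · by_cases hjL : j = iL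
      · -- ⟨u 1, E iL⟩ = ⟨u 1, u (2d-2)⟩ = 0
        have : ∑ t, u 1 t * E j t = 0 := by
          rw [hjL]
          have hEL : E iL = u ((2 * d - 2 : ℕ) : ZMod (2 * d)) := by
            have h2 : 2 * (iL : ℕ) = 2 * d - 2 := by rw [hiLv]; omega
            simp only [hE, h2]
          rw [hEL, hone]
          apply HO <;> try omega
          · rw [Nat.mod_eq_of_lt (by omega)]; omega
          · rw [Nat.mod_eq_of_lt (by omega)]; omega
        rw [this, mul_zero]
      · rw [hcj j hj hjL, zero_mul]
  -- hence u (2d-1) ⊥ u 0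
  have hperp : ∑ t, u ((2 * d - 1 : ℕ) : ZMod (2 * d)) t * u 0 t = 0 := by
    rw [hc, aux_dot_sum_left]
    apply Finset.sum_eq_zero
    intro j _
    by_cases hj0 : j = i0
    · rw [hj0, hc0, zero_mul]
    by_cases hjL : j = iL
    · -- ⟨E iL, u 0⟩ = ⟨u (2d-2), u 0⟩ = 0
      have hEL : E iL = u ((2 * d - 2 : ℕ) : ZMod (2 * d)) := by
        have h2 : 2 * (iL : ℕ) = 2 * d - 2 := by rw [hiLv]; omega
        simp only [hE, h2]
      rw [hjL, hEL, hzero]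
      rw [show (∑ t, u ((2 * d - 2 : ℕ) : ZMod (2 * d)) t * u ((0:ℕ) : ZMod (2*d)) t) = 0
        from ?_, mul_zero]
      apply HO <;> try omega
      · rw [Nat.mod_eq_of_lt (by omega)]; omega
      · rw [Nat.mod_eq_of_lt (by omega)]; omega
    · rw [hcj j hj0 hjL, zero_mul]
  -- expand u 0 in the odd basis
  obtain ⟨b, hb⟩ := aux_expand hdpos O hOorth hOnz (u 0)
  have hbj : ∀ j : Fin d, j ≠ i0 → b j = 0 := by
    intro j hj0
    have hj := j.isLt
    have hj0' : (j : ℕ) ≠ 0 := fun h => hj0 (Fin.ext (h.trans hi0v.symm))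
    have horto : ∑ t, u 0 t * O j t = 0 := by
      by_cases hjL : (j : ℕ) = d - 1
      · -- O iL = u (2d-1), and ⟨u 0, u(2d-1)⟩ = 0 by hperp and symmetry
        have hOL : O j = u ((2 * d - 1 : ℕ) : ZMod (2 * d)) := by
          have h2 : 2 * (j : ℕ) + 1 = 2 * d - 1 := by omega
          simp only [hO, h2]
        rw [hOL, ← sym]
        exact hperp
      · rw [hzero]
        apply HO <;> try omega
        · rw [Nat.mod_eq_of_lt (by omega)]; omega
        · rcases Nat.lt_or_ge ((j : ℕ) + 1) d with h | h
          · rw [Nat.mod_eq_of_lt (by omega)]; omega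
          · omega
    have := aux_coef hdpos O hOorth hOnz _ b hb j
    rw [horto] at this
    exact ((mul_eq_zero.1 this.symm).resolve_right (hOnz j))
  -- so u 0 = b i0 • u 1
  have hu0 : u 0 = b i0 • u 1 := by
    have hO0 : O i0 = u 1 := by
      simp only [hO, hi0v, Nat.mul_zero, Nat.zero_add, Nat.cast_one]
    rw [hb, Fintype.sum_eq_single i0 (fun j hj => by rw [hbj j hj, zero_smul]), hO0]
  -- b i0 ≠ 0 since ⟨u 0, u 0⟩ ≠ 0
  have hb0 : b i0 ≠ 0 := by
    intro h
    rw [h, zero_smul] at hu0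
    exact hself 0 (by rw [hu0]; simp)
  refine ⟨(b i0)⁻¹, ?_⟩
  rw [hu0, smul_smul, inv_mul_cancel₀ hb0, one_smul]
end

section
/- Let F be a field, G=(V,E) a finite graph, X ⊆ V a vertex cover of G, and d a positive integer. Suppose F^d contains no nonzero self-orthogonal vector. Let K be the graph with vertex set X ∪ {v_S : S ∈ 𝒮}, where 𝒮 is the collection of sets S ⊆ X with |S| = d such that S ⊆ N_G(v) for some v ∈ V∖X, with edges those of G[X] together with edges from each v_S to all vertices of S. Then od_F(G) ≤ d if and only if od_F(K) ≤ d. -/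
/-!
Since `X` is a vertex cover, an orthogonal representation of `G` is one of `G[X]` together with,
for every `v ∉ X`, a non-isotropic vector orthogonal to the vectors of the neighbours of `v`.
Such a vector exists unless those neighbour vectors span `F^d`, and then `d` of them already do,
indexed by a `d`-set `S ⊆ N(v) ∩ X`. So the only obstruction is exactly what the vertices `v_S`
of `K` test: a non-isotropic vector orthogonal to a spanning set would be orthogonal to itself.
-/

open Module Submodule

theorem Submodule.exists_finset_span_image_eq {K M ι : Type*} [DivisionRing K] [AddCommGroup M]
    [Module K M] (f : ι → M) (s : Set ι) [Module.Finite K (span K (f '' s))] :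
    ∃ S : Finset ι, ↑S ⊆ s ∧ S.card = finrank K (span K (f '' s)) ∧
      span K (f '' S) = span K (f '' s) := by
  classical
  obtain ⟨t, hts, ht_card, ht_span, -⟩ := exists_finset_span_eq_linearIndepOn K (f '' s)
  obtain ⟨S, hSs, hinj, rfl⟩ := Finset.exists_subset_injOn_image_eq_of_surjOn s t hts
  refine ⟨S, hSs, ?_, ?_⟩
  · rw [← ht_card, Finset.card_image_of_injOn hinj]
  · rw [← ht_span, Finset.coe_image]

section DotProduct

variable {F n : Type*} [Field F] [Fintype n]

theorem dotProduct_eq_zero_of_mem_span {s : Set (n → F)} {z : n → F}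
    (hz : ∀ p ∈ s, p ⬝ᵥ z = 0) {p : n → F} (hp : p ∈ span F s) : p ⬝ᵥ z = 0 := by
  induction hp using Submodule.span_induction with
  | mem p hp => exact hz p hp
  | zero => exact zero_dotProduct z
  | add p q _ _ hp hq => rw [add_dotProduct, hp, hq, add_zero]
  | smul c p _ hp => rw [smul_dotProduct, hp, smul_zero]

theorem exists_dotProduct_self_ne_zero_of_ne_top (hF : ∀ x : n → F, x ⬝ᵥ x = 0 → x = 0)
    {W : Submodule F (n → F)} (hW : W ≠ ⊤) :
    ∃ z : n → F, z ⬝ᵥ z ≠ 0 ∧ ∀ p ∈ W, p ⬝ᵥ z = 0 := by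
  classical
  obtain ⟨φ, hφ, hWφ⟩ := W.exists_le_ker_of_lt_top hW.lt_top
  obtain ⟨z, rfl⟩ := (dotProductEquiv F n).surjective φ
  refine ⟨z, fun hz => hφ ?_, fun p hp => ?_⟩
  · rw [hF z hz, map_zero]
  · rw [dotProduct_comm, ← dotProductEquiv_apply_apply]
    exact hWφ hp

theorem exists_dotProduct_self_ne_zero_of_forall_card_eq
    (hF : ∀ x : n → F, x ⬝ᵥ x = 0 → x = 0) {ι : Type*} (f : ι → n → F) (s : Set ι)
    (hs : ∀ S : Finset ι, ↑S ⊆ s → S.card = Fintype.card n →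
      ∃ z : n → F, z ⬝ᵥ z ≠ 0 ∧ ∀ i ∈ S, f i ⬝ᵥ z = 0) :
    ∃ z : n → F, z ⬝ᵥ z ≠ 0 ∧ ∀ i ∈ s, f i ⬝ᵥ z = 0 := by
  by_cases hspan : span F (f '' s) = ⊤
  · obtain ⟨S, hSs, hcard, hS⟩ := exists_finset_span_image_eq (K := F) f s
    rw [hspan, finrank_top, finrank_fintype_fun_eq_card] at hcard
    obtain ⟨z, hz, hSz⟩ := hs S hSs hcard
    have hzS : z ∈ span F (f '' S) := hS ▸ hspan ▸ mem_top
    exact absurd (dotProduct_eq_zero_of_mem_span (by simpa using hSz) hzS) hz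
  · obtain ⟨z, hz, hWz⟩ := exists_dotProduct_self_ne_zero_of_ne_top hF hspan
    exact ⟨z, hz, fun i hi => hWz _ (subset_span ⟨i, hi, rfl⟩)⟩

theorem SimpleGraph.IsVertexCover.exists_orthogonal_extension {V : Type*} {G : SimpleGraph V}
    {X : Set V} (hcover : G.IsVertexCover X) (w : X → n → F)
    (hw : ∀ x, w x ⬝ᵥ w x ≠ 0) (hwX : ∀ x y : X, G.Adj x y → w x ⬝ᵥ w y = 0)
    (hz : ∀ v ∉ X, ∃ z : n → F, z ⬝ᵥ z ≠ 0 ∧ ∀ x : X, G.Adj v x → w x ⬝ᵥ z = 0) :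
    ∃ u : V → n → F, (∀ v, u v ⬝ᵥ u v ≠ 0) ∧ ∀ v v', G.Adj v v' → u v ⬝ᵥ u v' = 0 := by
  classical
  choose z hz hzX using hz
  refine ⟨fun v => if h : v ∈ X then w ⟨v, h⟩ else z v h, fun v => ?_, fun a b hab => ?_⟩
  · by_cases h : v ∈ X
    · simpa [h] using hw _
    · simpa [h] using hz v h
  · by_cases ha : a ∈ X <;> by_cases hb : b ∈ X <;> simp only [ha, hb, dite_true, dite_false]
    · exact hwX ⟨a, ha⟩ ⟨b, hb⟩ hab
    · exact hzX b hb ⟨a, ha⟩ hab.symm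
    · rw [dotProduct_comm]
      exact hzX a ha ⟨b, hb⟩ hab
    · exact ((hcover hab).elim ha hb).elim

end DotProduct

theorem stmt_16_general (F : Type*) [Field F] (V : Type*)
    (G : SimpleGraph V) (X : Finset V)
    (hcover : ∀ v w, G.Adj v w → v ∈ X ∨ w ∈ X)
    (d : ℕ)
    (hF : ∀ x : Fin d → F, ∑ t, x t * x t = 0 → x = 0) :
    (∃ u : V → Fin d → F,
        (∀ v, ∑ t, u v t * u v t ≠ 0) ∧
        ∀ v w, G.Adj v w → ∑ t, u v t * u w t = 0) ↔
      (∃ w : ({x : V // x ∈ X} ⊕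
            {S : Finset V // S ⊆ X ∧ S.card = d ∧ ∃ v, v ∉ X ∧ ∀ s ∈ S, G.Adj v s}) →
            Fin d → F,
        (∀ a, ∑ t, w a t * w a t ≠ 0) ∧
        (∀ x y : {x : V // x ∈ X}, G.Adj x.1 y.1 →
          ∑ t, w (Sum.inl x) t * w (Sum.inl y) t = 0) ∧
        (∀ (x : {x : V // x ∈ X})
            (S : {S : Finset V // S ⊆ X ∧ S.card = d ∧ ∃ v, v ∉ X ∧ ∀ s ∈ S, G.Adj v s}),
          x.1 ∈ S.1 → ∑ t, w (Sum.inl x) t * w (Sum.inr S) t = 0)) := by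
  constructor
  · rintro ⟨u, hu, hadj⟩
    refine ⟨Sum.elim (fun x => u x.1) (fun S => u S.2.2.2.choose), ?_, fun x y h => hadj _ _ h,
      fun x S hxS => ?_⟩
    · rintro (x | S) <;> exact hu _
    · rw [← dotProduct, dotProduct_comm]
      exact hadj _ _ (S.2.2.2.choose_spec.2 x.1 hxS)
  · rintro ⟨w, hw, hwX, hwS⟩
    refine SimpleGraph.IsVertexCover.exists_orthogonal_extension (fun v w h => hcover v w h)
      (w ∘ .inl) (fun x => hw _) hwX fun v hv => ?_
    refine exists_dotProduct_self_ne_zero_of_forall_card_eq hF (w ∘ .inl) {x | G.Adj v x}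
      fun S hS hcard => ⟨_, hw (.inr ⟨S.map (.subtype _), ?_, ?_, v, hv, ?_⟩), fun x hx => ?_⟩
    · exact fun x => S.property_of_mem_map_subtype
    · simpa using hcard
    · simpa using fun s hs hsS => hS hsS
    · exact hwS x _ (by simpa using hx)

/-- od_F(G) ≤ d iff od_F(K) ≤ d, where K = K(G,X,d,d) is built from G[X]
by adding, for each d-subset S of X contained in the neighborhood of some vertex
outside X, a new vertex v_S adjacent exactly to S. (F^d has no nonzero self-orthogonal
vectors.) -/
theorem stmt_16 (F : Type*) [Field F] (V : Type*) [Fintype V] [DecidableEq V]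
    (G : SimpleGraph V) (X : Finset V)
    (hcover : ∀ v w, G.Adj v w → v ∈ X ∨ w ∈ X)
    (d : ℕ) (hd : 1 ≤ d)
    (hF : ∀ x : Fin d → F, ∑ t, x t * x t = 0 → x = 0) :
    (∃ u : V → Fin d → F,
        (∀ v, ∑ t, u v t * u v t ≠ 0) ∧
        ∀ v w, G.Adj v w → ∑ t, u v t * u w t = 0) ↔
      (∃ w : ({x : V // x ∈ X} ⊕
            {S : Finset V // S ⊆ X ∧ S.card = d ∧ ∃ v, v ∉ X ∧ ∀ s ∈ S, G.Adj v s}) →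
            Fin d → F,
        (∀ a, ∑ t, w a t * w a t ≠ 0) ∧
        (∀ x y : {x : V // x ∈ X}, G.Adj x.1 y.1 →
          ∑ t, w (Sum.inl x) t * w (Sum.inl y) t = 0) ∧
        (∀ (x : {x : V // x ∈ X})
            (S : {S : Finset V // S ⊆ X ∧ S.card = d ∧ ∃ v, v ∉ X ∧ ∀ s ∈ S, G.Adj v s}),
          x.1 ∈ S.1 → ∑ t, w (Sum.inl x) t * w (Sum.inr S) t = 0)) :=
  stmt_16_general F V G X hcover d hF
end

section
/- Let F be a field with no nonzero self-orthogonal vectors in F^d. Let G=(V,E) be a graph, (G,L) an instance assigning to each vertex v a subspace L(v) ⊆ F^d, and let w ∈ V be a vertex such that for every subspace Q ⊆ F^d satisfying Q ∩ L(v) ≠ {0} for all v ≠ w with N_G(v) = N_G(w), it holds that Q ∩ L(w) ≠ {0}. Let (G',L') be obtained by deleting w. Then G admits an orthogonal representation over F^d with u_v ∈ L(v) for all v if and only if G' admits one with u_v ∈ L'(v) for all v ≠ w. -/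
/-!
Deleting `w` trivially preserves a representation. Conversely, given a representation `u` of
`G - w`, let `Q` be the space of vectors orthogonal to `u v` for every neighbour `v` of `w`.
Each twin `v` of `w` (a vertex with `N(v) = N(w)`) has `u v ∈ Q ∩ L v`, and `u v ≠ 0` since it is
not self-orthogonal, so the hypothesis on `w` gives a nonzero `y ∈ Q ∩ L w`. As `F^d` has no
nonzero self-orthogonal vectors, `y` can be assigned to `w`.
-/

open Matrix

section

variable {F ι V : Type*} [Field F] [Fintype ι]

def dotOrthogonal (s : Set (ι → F)) : Submodule F (ι → F) :=
  ⨅ x ∈ s, LinearMap.ker (dotProductBilin F F x)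

theorem mem_dotOrthogonal {s : Set (ι → F)} {y : ι → F} :
    y ∈ dotOrthogonal s ↔ ∀ x ∈ s, x ⬝ᵥ y = 0 := by
  simp only [dotOrthogonal, Submodule.mem_iInf, LinearMap.mem_ker, dotProductBilin_apply_apply]

theorem mem_dotOrthogonal_image_neighborSet_of_twin {G : SimpleGraph V} {u : V → ι → F} {w v : V}
    (horth : ∀ v v', v ≠ w → v' ≠ w → G.Adj v v' → u v ⬝ᵥ u v' = 0)
    (hv : v ≠ w) (htwin : ∀ x, G.Adj v x ↔ G.Adj w x) :
    u v ∈ dotOrthogonal (u '' G.neighborSet w) := by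
  rw [mem_dotOrthogonal, Set.forall_mem_image]
  intro x hx
  rw [dotProduct_comm]
  exact horth v x hv (G.ne_of_adj hx).symm ((htwin x).2 hx)

theorem orthRep_update [DecidableEq V] {G : SimpleGraph V} {L : V → Submodule F (ι → F)}
    {u : V → ι → F} {w : V} {y : ι → F}
    (hL : ∀ v, v ≠ w → u v ∈ L v) (hnd : ∀ v, v ≠ w → u v ⬝ᵥ u v ≠ 0)
    (horth : ∀ v v', v ≠ w → v' ≠ w → G.Adj v v' → u v ⬝ᵥ u v' = 0)
    (hyL : y ∈ L w) (hyy : y ⬝ᵥ y ≠ 0) (hy : y ∈ dotOrthogonal (u '' G.neighborSet w)) :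
    let u' := Function.update u w y
    (∀ v, u' v ∈ L v) ∧ (∀ v, u' v ⬝ᵥ u' v ≠ 0) ∧ ∀ v v', G.Adj v v' → u' v ⬝ᵥ u' v' = 0 := by
  rw [mem_dotOrthogonal, Set.forall_mem_image] at hy
  refine ⟨fun v => ?_, fun v => ?_, fun v v' hadj => ?_⟩
  · rcases eq_or_ne v w with rfl | hv
    · simpa using hyL
    · simpa [hv] using hL v hv
  · rcases eq_or_ne v w with rfl | hv
    · simpa using hyy
    · simpa [hv] using hnd v hv
  · rcases eq_or_ne v w with rfl | hv
    · simpa [G.ne_of_adj hadj |>.symm, dotProduct_comm] using hy hadj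
    rcases eq_or_ne v' w with rfl | hv'
    · simpa [hv] using hy hadj.symm
    · simpa [hv, hv'] using horth v v' hv hv' hadj

end

theorem stmt_17_general (F : Type*) [Field F] (d : ℕ)
    (hF : ∀ x : Fin d → F, ∑ t, x t * x t = 0 → x = 0)
    (V : Type*) (G : SimpleGraph V)
    (L : V → Submodule F (Fin d → F)) (w : V)
    (hw : ∀ Q : Submodule F (Fin d → F),
      (∀ v, v ≠ w → (∀ x, G.Adj v x ↔ G.Adj w x) → Q ⊓ L v ≠ ⊥) → Q ⊓ L w ≠ ⊥) :
    (∃ u : V → Fin d → F,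
        (∀ v, u v ∈ L v) ∧
        (∀ v, ∑ t, u v t * u v t ≠ 0) ∧
        ∀ v v', G.Adj v v' → ∑ t, u v t * u v' t = 0) ↔
      (∃ u : V → Fin d → F,
        (∀ v, v ≠ w → u v ∈ L v) ∧
        (∀ v, v ≠ w → ∑ t, u v t * u v t ≠ 0) ∧
        ∀ v v', v ≠ w → v' ≠ w → G.Adj v v' → ∑ t, u v t * u v' t = 0) := by
  classical
  refine ⟨fun ⟨u, hL, hnd, horth⟩ => ⟨u, fun v _ => hL v, fun v _ => hnd v,
    fun v v' _ _ => horth v v'⟩, fun ⟨u, hL, hnd, horth⟩ => ?_⟩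
  have hQ : dotOrthogonal (u '' G.neighborSet w) ⊓ L w ≠ ⊥ := by
    refine hw _ fun v hv htwin => (Submodule.ne_bot_iff _).2 ⟨u v, ⟨?_, hL v hv⟩, ?_⟩
    · exact mem_dotOrthogonal_image_neighborSet_of_twin horth hv htwin
    · rintro hzero
      exact hnd v hv (by simp [hzero])
  obtain ⟨y, ⟨hyQ, hyL⟩, hy0⟩ := (Submodule.ne_bot_iff _).1 hQ
  exact ⟨_, orthRep_update hL hnd horth hyL (fun hyy => hy0 (hF y hyy)) hyQ⟩

/-- removing a vertex w whose subspace constraint is implied by those of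
its neighborhood-twins preserves solvability of the subspace-choosability instance. -/
theorem stmt_17 (F : Type*) [Field F] (d : ℕ)
    (hF : ∀ x : Fin d → F, ∑ t, x t * x t = 0 → x = 0)
    (V : Type*) [Fintype V] [DecidableEq V] (G : SimpleGraph V)
    (L : V → Submodule F (Fin d → F)) (w : V)
    (hw : ∀ Q : Submodule F (Fin d → F),
      (∀ v, v ≠ w → (∀ x, G.Adj v x ↔ G.Adj w x) → Q ⊓ L v ≠ ⊥) → Q ⊓ L w ≠ ⊥) :
    (∃ u : V → Fin d → F,
        (∀ v, u v ∈ L v) ∧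
        (∀ v, ∑ t, u v t * u v t ≠ 0) ∧
        ∀ v v', G.Adj v v' → ∑ t, u v t * u v' t = 0) ↔
      (∃ u : V → Fin d → F,
        (∀ v, v ≠ w → u v ∈ L v) ∧
        (∀ v, v ≠ w → ∑ t, u v t * u v t ≠ 0) ∧
        ∀ v v', v ≠ w → v' ≠ w → G.Adj v v' → ∑ t, u v t * u v' t = 0) :=
  stmt_17_general F d hF V G L w hw
end
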